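/- Let u ∈ ℝ^K with K > 1 be arbitrary. Then there exists a subset Γ ⊆ {1,…,K} such that |u(i)| ≤ 2|u(j)| for all i, j ∈ Γ and ‖u|_Γ‖₂ ≥ ‖u‖₂ / (2.5√(log₂ K)). -/

import Mathlib

/-!
Let `M = max |u i|` and `m = ⌈log₂ K⌉`. The dyadic shells `M / 2 ^ (k + 1) < |u i| ≤ M / 2 ^ k`,
`k < m`, are regular in the required sense. The coordinates outside all of them are at most
`M / 2 ^ m ≤ M / K` in absolute value, so together they carry energy at most `M² / K ≤ ‖u‖² / 2`;
hence some shell carries at least `‖u‖² / (2 m)`, and `2 m ≤ 4 log₂ K ≤ 6.25 log₂ K`.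
-/

noncomputable section

namespace OMP

open Matrix Finset

/-- The support of a vector, as a `Finset`. -/
def supp {n : ℕ} (x : Fin n → ℝ) : Finset (Fin n) :=
  Finset.univ.filter fun j => x j ≠ 0

/-- The Euclidean (ℓ²) norm of a vector. -/
def l2 {n : ℕ} (x : Fin n → ℝ) : ℝ := Real.sqrt (∑ j, x j ^ 2)

/-- The ℓ^∞ norm of a vector. -/
def linf {n : ℕ} (x : Fin n → ℝ) : ℝ := ⨆ j, |x j|

/-- The standard inner product of two vectors. -/
def dotp {n : ℕ} (x y : Fin n → ℝ) : ℝ := ∑ j, x j * y j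

/-- The restriction of a vector to a set of indices (zero elsewhere). -/
def restr {n : ℕ} (Γ : Finset (Fin n)) (x : Fin n → ℝ) : Fin n → ℝ :=
  fun j => if j ∈ Γ then x j else 0

/-- The restricted isometry property of order `K` with isometry constant `δ`. -/
def RIP {M N : ℕ} (K : ℕ) (Φ : Matrix (Fin M) (Fin N) ℝ) (δ : ℝ) : Prop :=
  0 < δ ∧ δ < 1 ∧ ∀ x : Fin N → ℝ, (supp x).card ≤ K →
    (1 - δ) * l2 x ^ 2 ≤ l2 (Φ.mulVec x) ^ 2 ∧
      l2 (Φ.mulVec x) ^ 2 ≤ (1 + δ) * l2 x ^ 2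

/-- The span of the columns of `Φ` indexed by `Λ`, as a submodule of Euclidean space. -/
def colSpan {M N : ℕ} (Φ : Matrix (Fin M) (Fin N) ℝ) (Λ : Finset (Fin N)) :
    Submodule ℝ (EuclideanSpace ℝ (Fin M)) :=
  Submodule.span ℝ ((fun j => (WithLp.equiv 2 (Fin M → ℝ)).symm fun i => Φ i j) '' (Λ : Set (Fin N)))

/-- Orthogonal projection `P_Λ` onto the span of the columns of `Φ` indexed by `Λ`. -/
def projCol {M N : ℕ} (Φ : Matrix (Fin M) (Fin N) ℝ) (Λ : Finset (Fin N))
    (v : Fin M → ℝ) : Fin M → ℝ :=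
  WithLp.equiv 2 (Fin M → ℝ)
    ((colSpan Φ Λ).orthogonalProjectionOnto ((WithLp.equiv 2 (Fin M → ℝ)).symm v) : EuclideanSpace ℝ (Fin M))

/-- The matrix `A_Λ = (I - P_Λ) Φ`: the columns of `Φ` orthogonalized against `colSpan Φ Λ`. -/
def Amat {M N : ℕ} (Φ : Matrix (Fin M) (Fin N) ℝ) (Λ : Finset (Fin N)) :
    Matrix (Fin M) (Fin N) ℝ :=
  Matrix.of fun i j => Φ i j - projCol Φ Λ (fun i' => Φ i' j) i

section DyadicShell

variable {ι : Type*} [Fintype ι]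

def dyadicShell (u : ι → ℝ) (M : ℝ) (k : ℕ) : Finset ι :=
  univ.filter fun i => M / 2 ^ (k + 1) < |u i| ∧ |u i| ≤ M / 2 ^ k

theorem abs_le_two_mul_abs_of_mem_dyadicShell {u : ι → ℝ} {M : ℝ} {k : ℕ} {i j : ι}
    (hi : i ∈ dyadicShell u M k) (hj : j ∈ dyadicShell u M k) : |u i| ≤ 2 * |u j| := by
  simp only [dyadicShell, mem_filter, mem_univ, true_and] at hi hj
  calc |u i| ≤ M / 2 ^ k := hi.2
    _ = 2 * (M / 2 ^ (k + 1)) := by rw [pow_succ]; field_simp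
    _ ≤ 2 * |u j| := by linarith [hj.1]

theorem disjoint_dyadicShell {u : ι → ℝ} {M : ℝ} {k l : ℕ} (hkl : k < l) :
    Disjoint (dyadicShell u M k) (dyadicShell u M l) := by
  refine disjoint_left.2 fun i hk hl => ?_
  simp only [dyadicShell, mem_filter, mem_univ, true_and] at hk hl
  have hM : 0 ≤ M := by
    have := (abs_nonneg _).trans hk.2
    rcases div_nonneg_iff.1 this with h | h
    · exact h.1
    · exact absurd h.2 (not_le.2 (by positivity))
  have : M / 2 ^ l ≤ M / 2 ^ (k + 1) :=
    div_le_div_of_nonneg_left hM (by positivity) (pow_le_pow_right₀ one_le_two hkl)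
  linarith [hk.1, hl.2]

theorem pairwiseDisjoint_dyadicShell (u : ι → ℝ) (M : ℝ) (s : Set ℕ) :
    s.PairwiseDisjoint (dyadicShell u M) := fun _ _ _ _ hkl =>
  hkl.lt_or_gt.elim disjoint_dyadicShell fun h => (disjoint_dyadicShell h).symm

theorem exists_lt_mem_dyadicShell {u : ι → ℝ} {M : ℝ} {m : ℕ} {i : ι} (hiM : |u i| ≤ M)
    (hmi : M / 2 ^ m < |u i|) : ∃ k < m, i ∈ dyadicShell u M k := by
  have hui : 0 < |u i| := by
    have : 0 ≤ M / 2 ^ m := by have := (abs_nonneg (u i)).trans hiM; positivity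
    linarith
  obtain ⟨k, hk, hk'⟩ := exists_nat_pow_near ((one_le_div hui).2 hiM) one_lt_two
  rw [le_div_iff₀ hui] at hk
  rw [div_lt_iff₀ hui] at hk'
  have hkm : (2 : ℝ) ^ k < 2 ^ m := by
    rw [div_lt_iff₀ (by positivity)] at hmi
    nlinarith [pow_pos (two_pos (α := ℝ)) k]
  refine ⟨k, (pow_lt_pow_iff_right₀ one_lt_two).1 hkm, ?_⟩
  simp only [dyadicShell, mem_filter, mem_univ, true_and]
  exact ⟨(div_lt_iff₀ (by positivity)).2 (by linarith), (le_div_iff₀ (by positivity)).2 (by linarith)⟩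

theorem sum_sq_le_sum_dyadicShell_add {u : ι → ℝ} {M : ℝ} (hM : ∀ i, |u i| ≤ M) (m : ℕ) :
    ∑ i, u i ^ 2 ≤
      ∑ k ∈ range m, ∑ i ∈ dyadicShell u M k, u i ^ 2 + Fintype.card ι * (M / 2 ^ m) ^ 2 := by
  classical
  rw [← sum_filter_add_sum_filter_not univ fun i => M / 2 ^ m < |u i|]
  gcongr ?_ + ?_
  · rw [← sum_biUnion (pairwiseDisjoint_dyadicShell u M _)]
    refine sum_le_sum_of_subset_of_nonneg (fun i hi => ?_) fun i _ _ => sq_nonneg (u i)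
    obtain ⟨k, hkm, hk⟩ := exists_lt_mem_dyadicShell (hM i) (mem_filter.1 hi).2
    exact mem_biUnion.2 ⟨k, mem_range.2 hkm, hk⟩
  · calc _ ≤ ∑ _i ∈ univ.filter fun i => ¬M / 2 ^ m < |u i|, (M / 2 ^ m) ^ 2 := by
          refine sum_le_sum fun i hi => ?_
          rw [← sq_abs]
          exact pow_le_pow_left₀ (abs_nonneg _) (not_lt.1 (mem_filter.1 hi).2) 2
      _ ≤ _ := by
          rw [sum_const, nsmul_eq_mul]
          gcongr
          exact_mod_cast card_le_univ _

theorem card_mul_sq_div_two_pow_le {n m : ℕ} (hn : 2 ≤ n) (hnm : n ≤ 2 ^ m) (M : ℝ) :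
    n * (M / 2 ^ m) ^ 2 ≤ M ^ 2 / 2 := by
  have hn' : (2 : ℝ) ≤ n := by exact_mod_cast hn
  have hnm' : (n : ℝ) ≤ 2 ^ m := by exact_mod_cast hnm
  calc n * (M / 2 ^ m) ^ 2 = n * M ^ 2 / (2 ^ m) ^ 2 := by ring
    _ ≤ n * M ^ 2 / n ^ 2 := by gcongr
    _ = M ^ 2 / n := by field_simp
    _ ≤ M ^ 2 / 2 := by gcongr

/-- The coordinates below `M / 2 ^ m` carry at most half of the energy, and the rest is shared
by `m` shells. -/
theorem exists_sum_sq_dyadicShell_ge {u : ι → ℝ} {i₀ : ι} (hi₀ : ∀ i, |u i| ≤ |u i₀|) {m : ℕ}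
    (hm : 0 < m) (hι : 2 ≤ Fintype.card ι) (hιm : Fintype.card ι ≤ 2 ^ m) :
    ∃ k < m, (∑ i, u i ^ 2) / (2 * m) ≤ ∑ i ∈ dyadicShell u |u i₀| k, u i ^ 2 := by
  have hmax : |u i₀| ^ 2 ≤ ∑ i, u i ^ 2 := by
    rw [sq_abs]
    exact single_le_sum (fun i _ => sq_nonneg (u i)) (mem_univ i₀)
  have hshells : ∑ k ∈ range m, (∑ i, u i ^ 2) / (2 * m) ≤
      ∑ k ∈ range m, ∑ i ∈ dyadicShell u |u i₀| k, u i ^ 2 := by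
    have := sum_sq_le_sum_dyadicShell_add hi₀ m
    have := card_mul_sq_div_two_pow_le hι hιm |u i₀|
    rw [sum_const, card_range, nsmul_eq_mul]
    field_simp
    linarith
  obtain ⟨k, hk, hle⟩ := exists_le_of_sum_le (nonempty_range_iff.2 hm.ne') hshells
  exact ⟨k, mem_range.1 hk, hle⟩

end DyadicShell

theorem clog_le_two_mul_logb {b n : ℕ} (hb : 1 < b) (hn : b ≤ n) :
    (Nat.clog b n : ℝ) ≤ 2 * Real.logb b n := by
  have hb' : (1 : ℝ) < b := by exact_mod_cast hb
  have hn' : (b : ℝ) ≤ n := by exact_mod_cast hn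
  have hlog : 1 ≤ Real.logb b n := by
    rw [Real.le_logb_iff_rpow_le hb' (by linarith), Real.rpow_one]
    exact hn'
  have hclog : ((Nat.clog b n - 1 : ℕ) : ℝ) < Real.logb b n := by
    rw [Real.lt_logb_iff_rpow_lt hb' (by linarith), Real.rpow_natCast]
    exact_mod_cast Nat.pow_pred_clog_lt_self hb (hb.trans_le hn)
  rw [Nat.cast_pred (Nat.clog_pos hb (hb.trans_le hn))] at hclog
  linarith

theorem l2_restr {n : ℕ} (Γ : Finset (Fin n)) (x : Fin n → ℝ) :
    l2 (restr Γ x) = √(∑ j ∈ Γ, x j ^ 2) := by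
  simp [l2, restr, sum_ite_mem]

/-- Lemma 3.7 of ROMP: existence of a regularized subset carrying a
`1/(2.5 √(log₂ K))` fraction of the energy. -/
theorem stmt11 {K : ℕ} (hK : 1 < K) (u : Fin K → ℝ) :
    ∃ Γ : Finset (Fin K), (∀ i ∈ Γ, ∀ j ∈ Γ, |u i| ≤ 2 * |u j|) ∧
      l2 (restr Γ u) ≥ l2 u / (2.5 * Real.sqrt (Real.logb 2 K)) := by
  have : Nonempty (Fin K) := ⟨⟨0, by omega⟩⟩
  obtain ⟨i₀, hi₀⟩ := Finite.exists_max fun i => |u i|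
  have hm : 0 < Nat.clog 2 K := Nat.clog_pos one_lt_two hK
  obtain ⟨k, -, hk⟩ := exists_sum_sq_dyadicShell_ge hi₀ hm (by simpa using hK.nat_succ_le)
    (by simpa using Nat.le_pow_clog one_lt_two K)
  refine ⟨dyadicShell u |u i₀| k, fun i hi j hj => abs_le_two_mul_abs_of_mem_dyadicShell hi hj, ?_⟩
  have hlog : (Nat.clog 2 K : ℝ) ≤ 2 * Real.logb 2 K := by
    exact_mod_cast clog_le_two_mul_logb one_lt_two hK
  have hm' : (0 : ℝ) < Nat.clog 2 K := by exact_mod_cast hm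
  have hℓ : 0 < Real.logb 2 K := by linarith
  have h25 : (2.5 : ℝ) = √6.25 := by
    rw [show (6.25 : ℝ) = 2.5 ^ 2 by norm_num, Real.sqrt_sq (by norm_num)]
  rw [ge_iff_le, l2_restr, l2, h25, ← Real.sqrt_mul (by norm_num), ← Real.sqrt_div' _ (by positivity)]
  refine Real.sqrt_le_sqrt (le_trans ?_ hk)
  exact div_le_div_of_nonneg_left (sum_nonneg fun i _ => sq_nonneg (u i)) (by positivity)
    (by linarith)

end OMP
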